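/- arXiv:2205.06737 — 2 statements merged into one kernel-verified Lean document; each statement's English description precedes it below -/
import Mathlib

section
/- Let M be an invertible real n×n matrix, E an arbitrary real n×n matrix, and P' = MᵀM. Define K = ∫₀^∞ e^{−tP'}(P'E − EᵀP')e^{−tP'} dt. Then K is skew-symmetric, K satisfies P'K + KP' = P'E − EᵀP', and Mᵀ(ME − MK) is symmetric; consequently MK is the component of ME lying in M·so(n) in the unique decomposition ME = MK + M^{−T}S with K skew-symmetric and S symmetric. -/
/-!
Write `A = P'E - EᵀP'`. Diagonalising the positive definite matrix `P' = V diag(μ) Vᵀ`, the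
integrand becomes `V (B_kl e^{-(μ_k + μ_l) t}) Vᵀ` with `B = VᵀAV`, so
`K = V (B_kl / (μ_k + μ_l)) Vᵀ`, and this solves the Lyapunov equation `P'K + KP' = A`.
Transposing the integrand shows that `K` is skew because `A` is skew and `P'` symmetric.
Finally `Mᵀ(ME - MK) = P'E - P'K`, whose transpose `EᵀP' + KP'` equals it by the Lyapunov
equation.
-/

open Matrix MeasureTheory

namespace Matrix

variable {ι : Type*} [Fintype ι]

theorem integral_mul_mul_apply {X : ℝ → Matrix ι ι ℝ} {s : Set ℝ}
    (hX : ∀ k l, IntegrableOn (fun t => X t k l) s) (U W : Matrix ι ι ℝ) (i j : ι) :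
    ∫ t in s, (U * X t * W) i j = (U * of (fun k l => ∫ t in s, X t k l) * W) i j := by
  have hterm : ∀ k l, IntegrableOn (fun t => U i k * X t k l * W l j) s := fun k l =>
    ((hX k l).const_mul _).mul_const _
  simp only [mul_apply, of_apply, Finset.sum_mul]
  rw [integral_finsetSum _ fun l _ => integrable_finsetSum _ fun k _ => hterm k l]
  refine Finset.sum_congr rfl fun l _ => ?_
  rw [integral_finsetSum _ fun k _ => hterm k l]
  refine Finset.sum_congr rfl fun k _ => ?_
  rw [integral_mul_const, integral_const_mul]

variable [DecidableEq ι]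

theorem posDef_transpose_mul_self {M : Matrix ι ι ℝ} (hM : IsUnit M.det) : (Mᵀ * M).PosDef := by
  have hinj : Function.Injective M.mulVec :=
    mulVec_injective_iff_isUnit.mpr ((isUnit_iff_isUnit_det M).mpr hM)
  simpa [conjTranspose_eq_transpose_of_trivial] using PosDef.conjTranspose_mul_self M hinj

theorem PosDef.exists_orthogonal_diagonalization {P : Matrix ι ι ℝ} (hP : P.PosDef) :
    ∃ (V : Matrix ι ι ℝ) (μ : ι → ℝ), V * Vᵀ = 1 ∧ (∀ k, 0 < μ k) ∧ P = V * diagonal μ * Vᵀ := by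
  refine ⟨hP.1.eigenvectorUnitary, hP.1.eigenvalues, ?_, hP.eigenvalues_pos, ?_⟩
  · simpa [star_eq_conjTranspose] using (mem_unitaryGroup_iff.mp hP.1.eigenvectorUnitary.2)
  · simpa [star_eq_conjTranspose, RCLike.ofReal_real_eq_id] using hP.1.spectral_theorem

theorem exp_conj_diagonal {V : Matrix ι ι ℝ} (hV : V * Vᵀ = 1) (d : ι → ℝ) :
    NormedSpace.exp (V * diagonal d * Vᵀ) = V * diagonal (fun k => Real.exp (d k)) * Vᵀ := by
  rw [← inv_eq_right_inv hV, exp_conj _ _ (IsUnit.of_mul_eq_one _ hV), exp_diagonal, Pi.exp_def,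
    Real.exp_eq_exp_ℝ]

theorem exp_neg_smul_mul_mul_exp_neg_smul {P V : Matrix ι ι ℝ} {μ : ι → ℝ} (hV : V * Vᵀ = 1)
    (hP : P = V * diagonal μ * Vᵀ) (A : Matrix ι ι ℝ) (t : ℝ) :
    NormedSpace.exp ((-t) • P) * A * NormedSpace.exp ((-t) • P) =
      V * of (fun k l => (Vᵀ * A * V) k l * Real.exp (-(μ k + μ l) * t)) * Vᵀ := by
  have hexp : NormedSpace.exp ((-t) • P) = V * diagonal (fun k => Real.exp (-t * μ k)) * Vᵀ := by
    rw [← exp_conj_diagonal hV, hP, ← smul_mul_assoc, ← mul_smul_comm, ← diagonal_smul]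
    rfl
  calc _ = V * (diagonal (fun k => Real.exp (-t * μ k)) * (Vᵀ * A * V) *
        diagonal (fun k => Real.exp (-t * μ k))) * Vᵀ := by
        simp only [hexp, Matrix.mul_assoc]
    _ = _ := by
        congr 2
        ext k l
        simp only [mul_diagonal, diagonal_mul, of_apply]
        rw [show -(μ k + μ l) * t = -t * μ k + -t * μ l by ring, Real.exp_add]
        ring

noncomputable def lyapunovIntegral (P A : Matrix ι ι ℝ) : Matrix ι ι ℝ :=
  of fun i j => ∫ t in Set.Ioi (0 : ℝ),
    (NormedSpace.exp ((-t) • P) * A * NormedSpace.exp ((-t) • P)) i j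

theorem transpose_lyapunovIntegral {P : Matrix ι ι ℝ} (hP : Pᵀ = P) (A : Matrix ι ι ℝ) :
    (lyapunovIntegral P A)ᵀ = lyapunovIntegral P Aᵀ := by
  ext i j
  simp only [lyapunovIntegral, transpose_apply, of_apply]
  congr 1 with t
  rw [← transpose_apply (NormedSpace.exp ((-t) • P) * A * NormedSpace.exp ((-t) • P)),
    transpose_mul, transpose_mul, ← exp_transpose, transpose_smul, hP, Matrix.mul_assoc]

theorem lyapunovIntegral_neg (P A : Matrix ι ι ℝ) :
    lyapunovIntegral P (-A) = -lyapunovIntegral P A := by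
  ext i j
  simp only [lyapunovIntegral, of_apply, neg_apply, Matrix.mul_neg, Matrix.neg_mul, integral_neg]

theorem lyapunovIntegral_eq_conj {P V : Matrix ι ι ℝ} {μ : ι → ℝ} (hV : V * Vᵀ = 1)
    (hP : P = V * diagonal μ * Vᵀ) (hμ : ∀ k, 0 < μ k) (A : Matrix ι ι ℝ) :
    lyapunovIntegral P A = V * of (fun k l => (Vᵀ * A * V) k l / (μ k + μ l)) * Vᵀ := by
  have hdecay : ∀ k l, -(μ k + μ l) < 0 := fun k l => neg_lt_zero.mpr (add_pos (hμ k) (hμ l))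
  have hentry : ∀ k l, ∫ t in Set.Ioi 0, (Vᵀ * A * V) k l * Real.exp (-(μ k + μ l) * t) =
      (Vᵀ * A * V) k l / (μ k + μ l) := fun k l => by
    rw [integral_const_mul, integral_exp_mul_Ioi (hdecay k l), mul_zero, Real.exp_zero,
      neg_div_neg_eq, mul_one_div]
  ext i j
  simp only [lyapunovIntegral, of_apply, exp_neg_smul_mul_mul_exp_neg_smul hV hP]
  rw [integral_mul_mul_apply (X := fun t => of fun k l => (Vᵀ * A * V) k l *
    Real.exp (-(μ k + μ l) * t)) fun k l => (integrableOn_exp_mul_Ioi (hdecay k l) 0).const_mul _]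
  simp only [of_apply, hentry]

theorem mul_lyapunovIntegral_add_lyapunovIntegral_mul {P : Matrix ι ι ℝ} (hP : P.PosDef)
    (A : Matrix ι ι ℝ) :
    P * lyapunovIntegral P A + lyapunovIntegral P A * P = A := by
  obtain ⟨V, μ, hV, hμ, hPV⟩ := hP.exists_orthogonal_diagonalization
  have hVV : Vᵀ * V = 1 := mul_eq_one_comm.mp hV
  set C : Matrix ι ι ℝ := of fun k l => (Vᵀ * A * V) k l / (μ k + μ l)
  have hC : diagonal μ * C + C * diagonal μ = Vᵀ * A * V := by
    ext k l
    have hkl : μ k + μ l ≠ 0 := (add_pos (hμ k) (hμ l)).ne'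
    simp only [C, add_apply, diagonal_mul, mul_diagonal, of_apply]
    field_simp
  have hK : lyapunovIntegral P A = V * C * Vᵀ := lyapunovIntegral_eq_conj hV hPV hμ A
  calc P * lyapunovIntegral P A + lyapunovIntegral P A * P
      = V * (diagonal μ * (Vᵀ * V) * C + C * (Vᵀ * V) * diagonal μ) * Vᵀ := by
        rw [hK, hPV]
        simp only [Matrix.mul_add, Matrix.add_mul, Matrix.mul_assoc]
    _ = (V * Vᵀ) * A * (V * Vᵀ) := by
        rw [hVV, Matrix.mul_one, Matrix.mul_one, hC]
        simp only [Matrix.mul_assoc]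
    _ = A := by rw [hV, Matrix.one_mul, Matrix.mul_one]

end Matrix

/-- For invertible `M`, arbitrary `E`, and `P' = Mᵀ M`, the matrix
`K = ∫₀^∞ e^{-tP'}(P'E - EᵀP')e^{-tP'} dt` is skew-symmetric, solves
`P'K + KP' = P'E - EᵀP'`, and `Mᵀ(ME - MK)` is symmetric; hence `MK` is the vertical
component of `ME` in the decomposition `ME = MK + M⁻ᵀ S`. -/
theorem vertical_component_right (n : ℕ) (M E : Matrix (Fin n) (Fin n) ℝ)
    (hM : IsUnit M.det) :
    ∀ P' K : Matrix (Fin n) (Fin n) ℝ, P' = Mᵀ * M →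
      K = (Matrix.of fun i j : Fin n => ∫ t in Set.Ioi (0 : ℝ),
        (NormedSpace.exp ((-t) • P') * (P' * E - Eᵀ * P') *
          NormedSpace.exp ((-t) • P')) i j) →
      Kᵀ = -K ∧
      P' * K + K * P' = P' * E - Eᵀ * P' ∧
      (Mᵀ * (M * E - M * K))ᵀ = Mᵀ * (M * E - M * K) ∧
      M * E = M * K + (M⁻¹)ᵀ * (Mᵀ * (M * E - M * K)) := by
  intro P' K hP' hK
  change K = lyapunovIntegral P' _ at hK
  have hPsymm : P'ᵀ = P' := by rw [hP', transpose_mul, transpose_transpose]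
  have hskew : Kᵀ = -K := by
    rw [hK, transpose_lyapunovIntegral hPsymm, transpose_sub, transpose_mul, transpose_mul, hPsymm,
      transpose_transpose, ← lyapunovIntegral_neg, neg_sub]
  have hsolves : P' * K + K * P' = P' * E - Eᵀ * P' :=
    hK ▸ mul_lyapunovIntegral_add_lyapunovIntegral_mul (hP' ▸ posDef_transpose_mul_self hM) _
  have hfactor : Mᵀ * (M * E - M * K) = P' * E - P' * K := by
    rw [hP', Matrix.mul_sub, Matrix.mul_assoc, Matrix.mul_assoc]
  refine ⟨hskew, hsolves, ?_, ?_⟩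
  · have hKP : K * P' = P' * E - Eᵀ * P' - P' * K := by rw [← hsolves]; abel
    rw [hfactor, transpose_sub, transpose_mul, transpose_mul, hPsymm, hskew, Matrix.neg_mul,
      sub_neg_eq_add, hKP]
    abel
  · have hinvT : (M⁻¹)ᵀ * Mᵀ = 1 := by
      rw [← transpose_mul, mul_nonsing_inv M hM, transpose_one]
    rw [← Matrix.mul_assoc, hinvT, Matrix.one_mul, add_sub_cancel]
end

section
/- Let n ≥ 3. The image of the map α : {λ ∈ ℝⁿ : all λ_i > 0} → ℝⁿ, α(λ)_i = Σ_{j ≠ i} 1/(λ_i + λ_j), is an open subset of ℝⁿ. -/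
/-!
By the inverse function theorem it suffices that the derivative of `α` at every positive `λ`,
`v ↦ (-∑_{j ≠ i} (v_i + v_j) / (λ_i + λ_j)²)_i`, is injective. Pairing it with `v` and
symmetrising gives `-½ ∑_i ∑_{j ≠ i} (v_i + v_j)² / (λ_i + λ_j)²`, so a kernel vector has
`v_i + v_j = 0` for all `i ≠ j`; with three distinct indices this forces `v = 0`.
-/

open Finset Filter Topology

section OpenImage

variable {𝕜 : Type*} [NontriviallyNormedField 𝕜]
  {E F : Type*} [NormedAddCommGroup E] [NormedSpace 𝕜 E] [CompleteSpace E]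
  [NormedAddCommGroup F] [NormedSpace 𝕜 F] [CompleteSpace F]

theorem IsOpen.image_of_hasStrictFDerivAt_surj {f : E → F} {f' : E → E →L[𝕜] F} {s : Set E}
    (hs : IsOpen s) (hf : ∀ a ∈ s, HasStrictFDerivAt f (f' a) a)
    (hsurj : ∀ a ∈ s, (f' a).range = ⊤) : IsOpen (f '' s) := by
  rw [isOpen_iff_mem_nhds]
  rintro _ ⟨a, ha, rfl⟩
  rw [← (hf a ha).map_nhds_eq_of_surj (hsurj a ha)]
  exact image_mem_map (hs.mem_nhds ha)

end OpenImage

variable {ι : Type*} [Fintype ι]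

theorem eq_zero_of_forall_ne_add_eq_zero (hι : 2 < Fintype.card ι) {u : ι → ℝ}
    (hu : ∀ i j, i ≠ j → u i + u j = 0) : u = 0 := by
  obtain ⟨a, b, c, hab, hac, hbc⟩ := Fintype.two_lt_card_iff.1 hι
  have ha : u a = 0 := by linarith [hu a b hab, hu a c hac, hu b c hbc]
  funext i
  by_cases hia : i = a
  · rw [hia, ha, Pi.zero_apply]
  · rw [Pi.zero_apply]; linarith [hu i a hia]

variable [DecidableEq ι]

theorem Finset.sum_sum_erase_comm {M : Type*} [AddCommMonoid M] (f : ι → ι → M) :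
    ∑ i, ∑ j ∈ univ.erase i, f i j = ∑ i, ∑ j ∈ univ.erase i, f j i :=
  sum_comm' fun i j => by simp [ne_comm, and_comm]

theorem two_mul_sum_mul_sum_erase_mul_add {c : ι → ι → ℝ} (hc : ∀ i j, c i j = c j i)
    (u : ι → ℝ) :
    2 * ∑ i, u i * ∑ j ∈ univ.erase i, c i j * (u i + u j)
      = ∑ i, ∑ j ∈ univ.erase i, c i j * (u i + u j) ^ 2 := by
  have hswap : ∑ i, ∑ j ∈ univ.erase i, c i j * (u i + u j) * u j
      = ∑ i, ∑ j ∈ univ.erase i, c i j * (u i + u j) * u i := by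
    rw [sum_sum_erase_comm]
    simp only [hc, add_comm]
  calc 2 * ∑ i, u i * ∑ j ∈ univ.erase i, c i j * (u i + u j)
      = ∑ i, ∑ j ∈ univ.erase i, c i j * (u i + u j) * u i
        + ∑ i, ∑ j ∈ univ.erase i, c i j * (u i + u j) * u j := by
        rw [hswap, two_mul]; simp only [mul_comm (u _), sum_mul]
    _ = ∑ i, ∑ j ∈ univ.erase i, c i j * (u i + u j) ^ 2 := by
        rw [← sum_add_distrib]
        refine sum_congr rfl fun i _ => ?_
        rw [← sum_add_distrib]
        exact sum_congr rfl fun j _ => by ring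

theorem add_eq_zero_of_sum_erase_mul_add_eq_zero {c : ι → ι → ℝ} (hc : ∀ i j, c i j = c j i)
    (hc_pos : ∀ i j, i ≠ j → 0 < c i j) {u : ι → ℝ}
    (hu : ∀ i, ∑ j ∈ univ.erase i, c i j * (u i + u j) = 0) {i j : ι} (hij : i ≠ j) :
    u i + u j = 0 := by
  have hq : ∑ i, ∑ j ∈ univ.erase i, c i j * (u i + u j) ^ 2 = 0 := by
    rw [← two_mul_sum_mul_sum_erase_mul_add hc]; simp [hu]
  have hterm_nonneg : ∀ i, ∀ j ∈ univ.erase i, 0 ≤ c i j * (u i + u j) ^ 2 := fun i j hj =>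
    mul_nonneg (hc_pos i j (ne_of_mem_erase hj).symm).le (sq_nonneg _)
  have hterm : c i j * (u i + u j) ^ 2 = 0 := by
    rw [sum_eq_zero_iff_of_nonneg fun i _ => sum_nonneg (hterm_nonneg i)] at hq
    exact (sum_eq_zero_iff_of_nonneg (hterm_nonneg i)).1 (hq i (mem_univ i)) j
      (mem_erase.2 ⟨hij.symm, mem_univ j⟩)
  simpa [(hc_pos i j hij).ne'] using hterm

noncomputable def alpha (lam : ι → ℝ) : ι → ℝ := fun i => ∑ j ∈ univ.erase i, 1 / (lam i + lam j)

noncomputable def alphaDeriv (lam : ι → ℝ) : (ι → ℝ) →L[ℝ] (ι → ℝ) :=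
  ContinuousLinearMap.pi fun i => ∑ j ∈ univ.erase i, (-((lam i + lam j) ^ 2)⁻¹) •
    (ContinuousLinearMap.proj (R := ℝ) (φ := fun _ : ι => ℝ) i + ContinuousLinearMap.proj j)

theorem alphaDeriv_apply (lam v : ι → ℝ) (i : ι) :
    alphaDeriv lam v i = -∑ j ∈ univ.erase i, ((lam i + lam j) ^ 2)⁻¹ * (v i + v j) := by
  simp only [alphaDeriv, ContinuousLinearMap.pi_apply, _root_.sum_apply, smul_apply, add_apply,
    ContinuousLinearMap.proj_apply, smul_eq_mul, neg_mul, sum_neg_distrib]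

theorem hasStrictFDerivAt_alpha {lam : ι → ℝ} (hlam : ∀ i j, lam i + lam j ≠ 0) :
    HasStrictFDerivAt alpha (alphaDeriv lam) lam := by
  refine hasStrictFDerivAt_pi'' fun i => ?_
  simp only [alpha, one_div, alphaDeriv, ContinuousLinearMap.proj_pi]
  refine .fun_sum fun j _ => (hasStrictDerivAt_inv (hlam i j)).comp_hasStrictFDerivAt lam ?_
  exact (ContinuousLinearMap.proj (R := ℝ) (φ := fun _ : ι => ℝ) i
    + ContinuousLinearMap.proj j).hasStrictFDerivAt

theorem alphaDeriv_injective (hι : 2 < Fintype.card ι) {lam : ι → ℝ} (hlam : ∀ i, 0 < lam i) :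
    Function.Injective (alphaDeriv lam) := by
  refine (injective_iff_map_eq_zero _).2 fun u hu => eq_zero_of_forall_ne_add_eq_zero hι ?_
  refine fun i j => add_eq_zero_of_sum_erase_mul_add_eq_zero
    (c := fun i j => ((lam i + lam j) ^ 2)⁻¹) (fun i j => by rw [add_comm])
    (fun i j _ => by have := hlam i; have := hlam j; positivity) fun i => ?_
  simpa only [alphaDeriv_apply, Pi.zero_apply, neg_eq_zero] using congrFun hu i

/-- For `n ≥ 3`, the image of the positive cone under the map
`α(λ)_i = Σ_{j ≠ i} 1/(λ_i + λ_j)` is open in `ℝⁿ`. -/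
theorem alpha_image_open (n : ℕ) (hn : 3 ≤ n) :
    IsOpen ((fun lam : Fin n → ℝ =>
        fun i : Fin n => ∑ j ∈ Finset.univ.erase i, 1 / (lam i + lam j)) ''
      {lam : Fin n → ℝ | ∀ i, 0 < lam i}) := by
  have hcard : 2 < Fintype.card (Fin n) := by rw [Fintype.card_fin]; omega
  refine IsOpen.image_of_hasStrictFDerivAt_surj (f := alpha) ?_
    (fun lam hlam => hasStrictFDerivAt_alpha fun i j => (add_pos (hlam i) (hlam j)).ne')
    fun lam hlam => LinearMap.range_eq_top.2 <|
      LinearMap.injective_iff_surjective.1 (alphaDeriv_injective hcard hlam)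
  simp only [Set.ofPred_forall]
  exact isOpen_iInter_of_finite fun i => isOpen_lt continuous_const (continuous_apply i)
end
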